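/- Let f : [0,∞) → ℝ be continuous, twice continuously differentiable on (0,∞), with f' ≥ 0 and f'' ≤ 0 on (0,2]. Let ε₀ ∈ (0,1]. Then for all x, y, z ∈ ℝ^d with 0 < |x−y| ≤ ε₀ and |z| ≤ 1: f(|x−y+z|) − f(|x−y|) − (f'(|x−y|)/|x−y|) ⟨x−y, z⟩ ≤ 2 f'(|x−y|) |z|. -/

import Mathlib

open Set
open scoped RealInnerProductSpace

/-- let `f : [0,∞) → ℝ` be continuous, `C²` on `(0,∞)` with `f' ≥ 0`,
`f'' ≤ 0` on `(0,2]`, and `ε₀ ∈ (0,1]`. Then for `0 < |x−y| ≤ ε₀` and `|z| ≤ 1`: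
`f(|x−y+z|) − f(|x−y|) − (f'(|x−y|)/|x−y|)⟨x−y, z⟩ ≤ 2 f'(|x−y|)|z|`. -/
theorem statement10 {d : ℕ} (f : ℝ → ℝ)
    (hf_cont : ContinuousOn f (Set.Ici 0))
    (hf_smooth : ContDiffOn ℝ 2 f (Set.Ioi 0))
    (hf' : ∀ r : ℝ, 0 < r → r ≤ 2 → 0 ≤ deriv f r)
    (hf'' : ∀ r : ℝ, 0 < r → r ≤ 2 → deriv (deriv f) r ≤ 0)
    (ε₀ : ℝ) (hε₀ : 0 < ε₀) (hε₀1 : ε₀ ≤ 1)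
    (x y z : EuclideanSpace ℝ (Fin d))
    (hxy : 0 < ‖x - y‖) (hxy' : ‖x - y‖ ≤ ε₀) (hz : ‖z‖ ≤ 1) :
    f ‖x - y + z‖ - f ‖x - y‖ - (deriv f ‖x - y‖ / ‖x - y‖) * ⟪x - y, z⟫
      ≤ 2 * deriv f ‖x - y‖ * ‖z‖ := by
  set r := ‖x - y‖ with hrdef
  set s := ‖x - y + z‖ with hsdef
  have hr1 : r ≤ 1 := hxy'.trans hε₀1
  have hr2 : r ≤ 2 := hr1.trans one_le_two
  have hs0 : (0:ℝ) ≤ s := norm_nonneg _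
  have hsr : s ≤ r + ‖z‖ := norm_add_le _ _
  have hs2 : s ≤ 2 := by linarith
  have hf'r : 0 ≤ deriv f r := hf' r hxy hr2
  have hdiff : DifferentiableOn ℝ f (Ioi 0) :=
    hf_smooth.differentiableOn (by norm_num)
  have hdiffAt : ∀ t : ℝ, 0 < t → DifferentiableAt ℝ f t := fun t ht =>
    hdiff.differentiableAt (isOpen_Ioi.mem_nhds ht)
  have hderivC : ContDiffOn ℝ 1 (deriv f) (Ioi 0) :=
    hf_smooth.deriv_of_isOpen isOpen_Ioi (by norm_num)
  -- key bound : f s - f r ≤ deriv f r * ‖z‖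
  have key : f s - f r ≤ deriv f r * ‖z‖ := by
    rcases le_or_gt s r with h | h
    · -- f monotone on Icc 0 2
      have hmono : MonotoneOn f (Icc (0:ℝ) 2) := by
        apply monotoneOn_of_deriv_nonneg (convex_Icc _ _)
          (hf_cont.mono Icc_subset_Ici_self)
        · intro t ht
          rw [interior_Icc] at ht
          exact (hdiffAt t ht.1).differentiableWithinAt
        · intro t ht
          rw [interior_Icc] at ht
          exact hf' t ht.1 ht.2.le
      have := hmono ⟨hs0, hs2⟩ ⟨hxy.le, hr2⟩ h
      nlinarith [norm_nonneg z]
    · -- MVT plus antitone derivative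
      obtain ⟨c, hc, hceq⟩ := exists_deriv_eq_slope f h
        (hf_cont.mono (fun t ht => le_trans hxy.le ht.1))
        (hdiff.mono (fun t ht => lt_trans hxy ht.1))
      have hc0 : 0 < c := hxy.trans hc.1
      have hc2 : c ≤ 2 := hc.2.le.trans hs2
      have hanti : AntitoneOn (deriv f) (Icc r 2) := by
        apply antitoneOn_of_deriv_nonpos (convex_Icc _ _)
          (hderivC.continuousOn.mono (fun t ht => lt_of_lt_of_le hxy ht.1))
        · intro t ht
          rw [interior_Icc] at ht
          exact ((hderivC.differentiableOn one_ne_zero).differentiableAt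
            (isOpen_Ioi.mem_nhds (hxy.trans ht.1))).differentiableWithinAt
        · intro t ht
          rw [interior_Icc] at ht
          exact hf'' t (hxy.trans ht.1) ht.2.le
      have hcr : deriv f c ≤ deriv f r :=
        hanti ⟨le_refl r, hr2⟩ ⟨hc.1.le, hc2⟩ hc.1.le
      have hfsr : f s - f r = deriv f c * (s - r) := by
        have hne : s - r ≠ 0 := sub_ne_zero.mpr h.ne'
        rw [hceq, div_mul_cancel₀ _ hne]
      have hzr : s - r ≤ ‖z‖ := by linarith
      have h1 : deriv f c * (s - r) ≤ deriv f r * (s - r) :=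
        mul_le_mul_of_nonneg_right hcr (by linarith)
      have h2 : deriv f r * (s - r) ≤ deriv f r * ‖z‖ :=
        mul_le_mul_of_nonneg_left hzr hf'r
      linarith
  -- inner product bound
  have hinner : |⟪x - y, z⟫| ≤ r * ‖z‖ := abs_real_inner_le_norm _ _
  have hir : -⟪x - y, z⟫ ≤ r * ‖z‖ := by
    have := abs_le.mp hinner; linarith [this.1]
  have ha : 0 ≤ deriv f r / r := div_nonneg hf'r hxy.le
  have har : deriv f r / r * (r * ‖z‖) = deriv f r * ‖z‖ := by
    field_simp
  have h3 : deriv f r / r * (-⟪x - y, z⟫) ≤ deriv f r * ‖z‖ := by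
    calc deriv f r / r * (-⟪x - y, z⟫) ≤ deriv f r / r * (r * ‖z‖) :=
          mul_le_mul_of_nonneg_left hir ha
      _ = deriv f r * ‖z‖ := har
  nlinarith
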